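/- Let m₁ < m₂ be positive integers and α ∈ (0,1) with m₁α and m₂α both integers (and ≥ 1). Define h(t) = F_bin(m₂α−1; m₂−1, t) − F_bin(m₁α−1; m₁−1, t) for t ∈ [0,1]. Then: (i) there exists t₀ ∈ (0,1) such that h(t) > 0 for all t ∈ (0, t₀) and h(t) < 0 for all t ∈ (t₀, 1); and (ii) ∫₀¹ h(t) dt = 0. -/

import Mathlib

open MeasureTheory Finset

/-- Binomial CDF: probability of at most `k` successes in `n` trials. -/
noncomputable def binCDF (k : ℤ) (n : ℕ) (p : ℝ) : ℝ :=
  ∑ j ∈ Finset.range (k + 1).toNat, (n.choose j : ℝ) * p ^ j * (1 - p) ^ (n - j)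

/-!
Differentiating the Bernstein basis term by term, the derivative of `t ↦ binCDF k (n + 1) t`
telescopes to `-(n + 1)` times the Bernstein polynomial `b_{n,k}`, so each `b_{n,j}` with `j ≤ n`
integrates to `1 / (n + 1)` and `binCDF k n` to `(k + 1) / (n + 1)`; with `K = m α` both
integrals equal `α`, which is (ii).

For (i), write `k₂ = k₁ + a` and `n₂ - k₂ = (n₁ - k₁) + b`; `α ∈ (0, 1)` and `m₁ < m₂` force
`a, b ≥ 1`. The derivative of `h` is then `p(t) (L - t^a (1 - t)^b)` with `p > 0` on `(0, 1)`.
As `t^a (1 - t)^b` is unimodal, `h` increases, decreases, then increases again (the middle phase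
must occur because `h(0) = h(1) = 0`), so it changes sign exactly once.
-/

open Polynomial Set

theorem derivative_sum_bernsteinPolynomial {R : Type*} [CommRing R] (n k : ℕ) :
    derivative (∑ j ∈ range (k + 1), bernsteinPolynomial R (n + 1) j) =
      -((n + 1 : R[X]) * bernsteinPolynomial R n k) := by
  induction k with
  | zero =>
    rw [zero_add, sum_range_one, bernsteinPolynomial.derivative_zero, Nat.add_sub_cancel]
    push_cast
    ring
  | succ k ih =>
    rw [sum_range_succ, derivative_add, ih, bernsteinPolynomial.derivative_succ_aux]
    ring

theorem binCDF_eq_eval_sum_bernsteinPolynomial (k n : ℕ) (t : ℝ) :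
    binCDF k n t = (∑ j ∈ range (k + 1), bernsteinPolynomial ℝ n j).eval t := by
  simp [binCDF, bernsteinPolynomial, eval_finsetSum]

theorem hasDerivAt_binCDF (k n : ℕ) (t : ℝ) :
    HasDerivAt (binCDF k (n + 1)) (-(n + 1) * (n.choose k * t ^ k * (1 - t) ^ (n - k))) t := by
  have := (∑ j ∈ range (k + 1), bernsteinPolynomial ℝ (n + 1) j).hasDerivAt t
  simp only [derivative_sum_bernsteinPolynomial, ← binCDF_eq_eval_sum_bernsteinPolynomial] at this
  refine this.congr_deriv ?_
  simp only [bernsteinPolynomial, eval_neg, eval_mul, eval_add, eval_natCast, eval_one, eval_pow,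
    eval_X, eval_sub]
  ring

theorem binCDF_zero (k n : ℕ) : binCDF k n 0 = 1 := by
  simp [binCDF_eq_eval_sum_bernsteinPolynomial, eval_finsetSum, bernsteinPolynomial.eval_at_0]

theorem binCDF_one {k n : ℕ} (hk : k < n) : binCDF k n 1 = 0 := by
  simpa [binCDF_eq_eval_sum_bernsteinPolynomial, eval_finsetSum, bernsteinPolynomial.eval_at_1]
    using hk

theorem continuous_binCDF (k : ℤ) (n : ℕ) : Continuous (binCDF k n) := by
  unfold binCDF; fun_prop

theorem integral_bernsteinPolynomial {n j : ℕ} (hj : j ≤ n) :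
    ∫ t in (0 : ℝ)..1, (bernsteinPolynomial ℝ n j).eval t = 1 / (n + 1) := by
  have hF : ∀ t ∈ uIcc (0 : ℝ) 1,
      HasDerivAt (fun t => -(binCDF j (n + 1) t / (n + 1)))
        ((bernsteinPolynomial ℝ n j).eval t) t := by
    intro t _
    refine ((hasDerivAt_binCDF j n t).div_const (n + 1)).neg.congr_deriv ?_
    simp only [bernsteinPolynomial, eval_mul, eval_natCast, eval_pow, eval_X, eval_sub, eval_one]
    field_simp
  rw [intervalIntegral.integral_eq_sub_of_hasDerivAt hF
      ((Polynomial.continuous _).intervalIntegrable _ _),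
    binCDF_one (Nat.lt_succ_of_le hj), binCDF_zero]
  ring

theorem integral_binCDF {k n : ℕ} (hk : k ≤ n) :
    ∫ t in (0 : ℝ)..1, binCDF k n t = (k + 1) / (n + 1) := by
  simp_rw [binCDF_eq_eval_sum_bernsteinPolynomial, eval_finsetSum]
  rw [intervalIntegral.integral_finsetSum
      fun _ _ => (Polynomial.continuous _).intervalIntegrable _ _,
    sum_congr rfl fun j hj => integral_bernsteinPolynomial (by grind)]
  simp [div_eq_mul_inv]

theorem hasDerivAt_pow_mul_one_sub_pow (a b : ℕ) (t : ℝ) :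
    HasDerivAt (fun t : ℝ => t ^ (a + 1) * (1 - t) ^ (b + 1))
      (t ^ a * (1 - t) ^ b * (a + 1 - (a + b + 2) * t)) t := by
  refine ((hasDerivAt_pow (a + 1) t).mul
    (((hasDerivAt_id t).const_sub 1).pow (b + 1))).congr_deriv ?_
  simp only [Nat.add_sub_cancel, Nat.cast_add, Nat.cast_one, Pi.pow_apply, id]
  ring

theorem strictMonoOn_pow_mul_one_sub_pow {a b : ℕ} (ha : 0 < a) (hb : 0 < b) :
    StrictMonoOn (fun t : ℝ => t ^ a * (1 - t) ^ b) (Icc 0 (a / (a + b))) := by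
  obtain ⟨a, rfl⟩ := Nat.exists_eq_add_one_of_ne_zero ha.ne'
  obtain ⟨b, rfl⟩ := Nat.exists_eq_add_one_of_ne_zero hb.ne'
  refine strictMonoOn_of_hasDerivWithinAt_pos (convex_Icc _ _) (by fun_prop)
    (fun t _ => (hasDerivAt_pow_mul_one_sub_pow a b t).hasDerivWithinAt) fun t ht => ?_
  rw [interior_Icc, Set.mem_Ioo, lt_div_iff₀ (by positivity)] at ht
  push_cast at ht
  have h1 : 0 < 1 - t := by nlinarith
  have h2 : 0 < a + 1 - (a + b + 2) * (t : ℝ) := by linarith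
  exact mul_pos (mul_pos (pow_pos ht.1 _) (pow_pos h1 _)) h2

theorem strictAntiOn_pow_mul_one_sub_pow {a b : ℕ} (ha : 0 < a) (hb : 0 < b) :
    StrictAntiOn (fun t : ℝ => t ^ a * (1 - t) ^ b) (Icc (a / (a + b)) 1) := by
  obtain ⟨a, rfl⟩ := Nat.exists_eq_add_one_of_ne_zero ha.ne'
  obtain ⟨b, rfl⟩ := Nat.exists_eq_add_one_of_ne_zero hb.ne'
  refine strictAntiOn_of_hasDerivWithinAt_neg (convex_Icc _ _) (by fun_prop)
    (fun t _ => (hasDerivAt_pow_mul_one_sub_pow a b t).hasDerivWithinAt) fun t ht => ?_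
  rw [interior_Icc, Set.mem_Ioo, div_lt_iff₀ (by positivity)] at ht
  push_cast at ht
  have h0 : 0 < t := by nlinarith
  have h1 : 0 < 1 - t := by linarith
  have h2 : a + 1 - (a + b + 2) * (t : ℝ) < 0 := by linarith
  exact mul_neg_of_pos_of_neg (mul_pos (pow_pos h0 _) (pow_pos h1 _)) h2

section SingleCrossing

variable {u v : ℝ}

theorem exists_level_crossings_of_unimodal {ψ : ℝ → ℝ} {c L : ℝ} (hψ : ContinuousOn ψ (Icc u v))
    (hc : c ∈ Ioo u v) (hmono : StrictMonoOn ψ (Icc u c)) (hanti : StrictAntiOn ψ (Icc c v))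
    (hu : ψ u < L) (hv : ψ v < L) (hL : L < ψ c) :
    ∃ t₁ ∈ Ioo u c, ∃ t₂ ∈ Ioo c v,
      (∀ t ∈ Ioo u t₁, ψ t < L) ∧ (∀ t ∈ Ioo t₁ t₂, L < ψ t) ∧ ∀ t ∈ Ioo t₂ v, ψ t < L := by
  obtain ⟨t₁, ht₁, hψt₁⟩ := intermediate_value_Ioo hc.1.le (hψ.mono (Icc_subset_Icc_right hc.2.le))
    ⟨hu, hL⟩
  obtain ⟨t₂, ht₂, hψt₂⟩ := intermediate_value_Ioo' hc.2.le (hψ.mono (Icc_subset_Icc_left hc.1.le))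
    ⟨hv, hL⟩
  refine ⟨t₁, ht₁, t₂, ht₂, fun t ht => ?_, fun t ht => ?_, fun t ht => ?_⟩
  · rw [← hψt₁]
    exact hmono ⟨ht.1.le, by linarith [ht₁.2, ht.2]⟩ ⟨ht₁.1.le, ht₁.2.le⟩ ht.2
  · rcases le_total t c with htc | htc
    · rw [← hψt₁]
      exact hmono ⟨ht₁.1.le, ht₁.2.le⟩ ⟨by linarith [ht₁.1, ht.1], htc⟩ ht.1
    · rw [← hψt₂]
      exact hanti ⟨htc, by linarith [ht₂.2, ht.2]⟩ ⟨ht₂.1.le, ht₂.2.le⟩ ht.2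
  · rw [← hψt₂]
    exact hanti ⟨ht₂.1.le, ht₂.2.le⟩ ⟨by linarith [ht₂.1, ht.1], ht.2.le⟩ ht.1

theorem exists_single_crossing_of_strictMonoOn_of_strictAntiOn {g : ℝ → ℝ} {t₁ t₂ : ℝ}
    (hut₁ : u < t₁) (ht₁₂ : t₁ < t₂) (ht₂v : t₂ < v) (hg : ContinuousOn g (Icc t₁ t₂))
    (hu : g u = 0) (hv : g v = 0) (hmono₁ : StrictMonoOn g (Icc u t₁))
    (hanti : StrictAntiOn g (Icc t₁ t₂)) (hmono₂ : StrictMonoOn g (Icc t₂ v)) :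
    ∃ t₀ ∈ Ioo u v, (∀ t ∈ Ioo u t₀, 0 < g t) ∧ ∀ t ∈ Ioo t₀ v, g t < 0 := by
  have hpos : ∀ t ∈ Ioc u t₁, 0 < g t := fun t ht =>
    hu ▸ hmono₁ ⟨le_rfl, hut₁.le⟩ ⟨ht.1.le, ht.2⟩ ht.1
  have hneg : ∀ t ∈ Ico t₂ v, g t < 0 := fun t ht =>
    hv ▸ hmono₂ ⟨ht.1, ht.2.le⟩ ⟨ht₂v.le, le_rfl⟩ ht.2
  obtain ⟨t₀, ht₀, hgt₀⟩ := intermediate_value_Ioo' ht₁₂.le hg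
    ⟨hneg t₂ ⟨le_rfl, ht₂v⟩, hpos t₁ ⟨hut₁, le_rfl⟩⟩
  refine ⟨t₀, ⟨hut₁.trans ht₀.1, ht₀.2.trans ht₂v⟩, fun t ht => ?_, fun t ht => ?_⟩
  · rcases le_or_gt t t₁ with htt₁ | htt₁
    · exact hpos t ⟨ht.1, htt₁⟩
    · exact hgt₀ ▸ hanti ⟨htt₁.le, by linarith [ht.2, ht₀.2]⟩ ⟨ht₀.1.le, ht₀.2.le⟩ ht.2
  · rcases lt_or_ge t t₂ with htt₂ | htt₂
    · exact hgt₀ ▸ hanti ⟨ht₀.1.le, ht₀.2.le⟩ ⟨by linarith [ht.1, ht₀.1], htt₂.le⟩ ht.1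
    · exact hneg t ⟨htt₂, ht.2⟩

theorem exists_single_crossing_of_hasDerivAt {g p ψ : ℝ → ℝ} {c L : ℝ}
    (hg : ContinuousOn g (Icc u v)) (hg' : ∀ t ∈ Ioo u v, HasDerivAt g (p t * (L - ψ t)) t)
    (hp : ∀ t ∈ Ioo u v, 0 < p t) (hu : g u = 0) (hv : g v = 0)
    (hψ : ContinuousOn ψ (Icc u v)) (hc : c ∈ Ioo u v) (hmono : StrictMonoOn ψ (Icc u c))
    (hanti : StrictAntiOn ψ (Icc c v)) (hψu : ψ u < L) (hψv : ψ v < L) :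
    ∃ t₀ ∈ Ioo u v, (∀ t ∈ Ioo u t₀, 0 < g t) ∧ ∀ t ∈ Ioo t₀ v, g t < 0 := by
  have hasDerivWithinAt_interior {x y : ℝ} (hx : u ≤ x) (hy : y ≤ v) :
      ∀ t ∈ interior (Icc x y), HasDerivWithinAt g (p t * (L - ψ t)) (interior (Icc x y)) t := by
    intro t ht
    rw [interior_Icc] at ht
    exact (hg' t ⟨hx.trans_lt ht.1, ht.2.trans_le hy⟩).hasDerivWithinAt
  have strictMonoOn_of_lt {x y : ℝ} (hx : u ≤ x) (hy : y ≤ v) (h : ∀ t ∈ Ioo x y, ψ t < L) :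
      StrictMonoOn g (Icc x y) := by
    refine strictMonoOn_of_hasDerivWithinAt_pos (convex_Icc x y)
      (hg.mono (Icc_subset_Icc hx hy)) (hasDerivWithinAt_interior hx hy) fun t ht => ?_
    rw [interior_Icc] at ht
    exact mul_pos (hp t ⟨hx.trans_lt ht.1, ht.2.trans_le hy⟩) (sub_pos.2 (h t ht))
  have strictAntiOn_of_gt {x y : ℝ} (hx : u ≤ x) (hy : y ≤ v) (h : ∀ t ∈ Ioo x y, L < ψ t) :
      StrictAntiOn g (Icc x y) := by
    refine strictAntiOn_of_hasDerivWithinAt_neg (convex_Icc x y)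
      (hg.mono (Icc_subset_Icc hx hy)) (hasDerivWithinAt_interior hx hy) fun t ht => ?_
    rw [interior_Icc] at ht
    exact mul_neg_of_pos_of_neg (hp t ⟨hx.trans_lt ht.1, ht.2.trans_le hy⟩) (sub_neg.2 (h t ht))
  -- If `ψ` never exceeded `L`, `g` would increase strictly from `g u = 0` to `g v = 0`.
  have hL : L < ψ c := by
    by_contra! hψc
    have left : g u < g c := strictMonoOn_of_lt le_rfl hc.2.le
      (fun t ht => (hmono ⟨ht.1.le, ht.2.le⟩ ⟨hc.1.le, le_rfl⟩ ht.2).trans_le hψc)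
      ⟨le_rfl, hc.1.le⟩ ⟨hc.1.le, le_rfl⟩ hc.1
    have right : g c < g v := strictMonoOn_of_lt hc.1.le le_rfl
      (fun t ht => (hanti ⟨le_rfl, hc.2.le⟩ ⟨ht.1.le, ht.2.le⟩ ht.1).trans_le hψc)
      ⟨le_rfl, hc.2.le⟩ ⟨hc.2.le, le_rfl⟩ hc.2
    linarith
  obtain ⟨t₁, ht₁, t₂, ht₂, hlt₁, hgt, hlt₂⟩ :=
    exists_level_crossings_of_unimodal hψ hc hmono hanti hψu hψv hL
  exact exists_single_crossing_of_strictMonoOn_of_strictAntiOn ht₁.1 (ht₁.2.trans ht₂.1) ht₂.2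
    (hg.mono (Icc_subset_Icc ht₁.1.le ht₂.2.le)) hu hv
    (strictMonoOn_of_lt le_rfl (ht₁.2.trans hc.2).le hlt₁)
    (strictAntiOn_of_gt ht₁.1.le ht₂.2.le hgt)
    (strictMonoOn_of_lt (hc.1.trans ht₂.1).le le_rfl hlt₂)

end SingleCrossing

theorem binCDF_sub_binCDF_single_crossing {k₁ k₂ n₁ n₂ : ℕ} (hk₁ : k₁ < n₁) (hk : k₁ < k₂)
    (hn : n₁ - k₁ < n₂ - k₂) :
    ∃ t₀ ∈ Ioo (0 : ℝ) 1, (∀ t ∈ Ioo 0 t₀, 0 < binCDF k₂ n₂ t - binCDF k₁ n₁ t) ∧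
      ∀ t ∈ Ioo t₀ 1, binCDF k₂ n₂ t - binCDF k₁ n₁ t < 0 := by
  obtain ⟨e, rfl⟩ : ∃ e, n₁ = k₁ + e + 1 := ⟨n₁ - k₁ - 1, by omega⟩
  obtain ⟨a, rfl⟩ : ∃ a, k₂ = k₁ + a := ⟨k₂ - k₁, by omega⟩
  obtain ⟨b, rfl⟩ : ∃ b, n₂ = k₁ + a + e + b + 1 := ⟨n₂ - k₁ - a - e - 1, by omega⟩
  have ha : 0 < a := by omega
  have hb : 0 < b := by omega
  set A : ℝ := (k₁ + e + 1) * (k₁ + e).choose k₁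
  set B : ℝ := (k₁ + a + e + b + 1) * (k₁ + a + e + b).choose (k₁ + a)
  have hA : 0 < A := by positivity [Nat.choose_pos (by omega : k₁ ≤ k₁ + e)]
  have hB : 0 < B := by positivity [Nat.choose_pos (by omega : k₁ + a ≤ k₁ + a + e + b)]
  have hc : (a / (a + b) : ℝ) ∈ Set.Ioo 0 1 := by
    constructor
    · positivity
    · rw [div_lt_one (by positivity)]; exact_mod_cast (by omega : a < a + b)
  refine exists_single_crossing_of_hasDerivAt (p := fun t => B * (t ^ k₁ * (1 - t) ^ e))
    (ψ := fun t => t ^ a * (1 - t) ^ b) (L := A / B)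
    ((continuous_binCDF _ _).sub (continuous_binCDF _ _)).continuousOn (fun t _ => ?_)
    (fun t ht => ?_)
    (by rw [binCDF_zero, binCDF_zero, sub_self])
    (by rw [binCDF_one (by omega), binCDF_one hk₁, sub_self]) (by fun_prop) hc
    (strictMonoOn_pow_mul_one_sub_pow ha hb) (strictAntiOn_pow_mul_one_sub_pow ha hb) ?_ ?_
  · refine ((hasDerivAt_binCDF (k₁ + a) (k₁ + a + e + b) t).sub
      (hasDerivAt_binCDF k₁ (k₁ + e) t)).congr_deriv ?_
    rw [show k₁ + a + e + b - (k₁ + a) = e + b by omega, show k₁ + e - k₁ = e by omega]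
    field_simp
    push_cast [A, B]
    ring
  · exact mul_pos hB (mul_pos (pow_pos ht.1 _) (pow_pos (sub_pos.2 ht.2) _))
  · simpa [zero_pow ha.ne'] using div_pos hA hB
  · simpa [zero_pow hb.ne'] using div_pos hA hB

theorem h_single_crossing (m₁ m₂ K₁ K₂ : ℕ) (hm₁ : 0 < m₁) (hm : m₁ < m₂)
    (α : ℝ) (hα : α ∈ Set.Ioo (0 : ℝ) 1)
    (hK₁ : (K₁ : ℝ) = (m₁ : ℝ) * α) (hK₂ : (K₂ : ℝ) = (m₂ : ℝ) * α)
    (hK₁pos : 1 ≤ K₁) (hK₂pos : 1 ≤ K₂) :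
    (∃ t₀ ∈ Set.Ioo (0 : ℝ) 1,
      (∀ t ∈ Set.Ioo (0 : ℝ) t₀,
        0 < binCDF ((K₂ : ℤ) - 1) (m₂ - 1) t - binCDF ((K₁ : ℤ) - 1) (m₁ - 1) t) ∧
      (∀ t ∈ Set.Ioo t₀ (1 : ℝ),
        binCDF ((K₂ : ℤ) - 1) (m₂ - 1) t - binCDF ((K₁ : ℤ) - 1) (m₁ - 1) t < 0)) ∧
    (∫ t in (0 : ℝ)..1,
        (binCDF ((K₂ : ℤ) - 1) (m₂ - 1) t - binCDF ((K₁ : ℤ) - 1) (m₁ - 1) t)) = 0 := by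
  obtain ⟨hα₀, hα₁⟩ := hα
  obtain ⟨k₁, rfl⟩ := Nat.exists_eq_add_one_of_ne_zero (by omega : K₁ ≠ 0)
  obtain ⟨k₂, rfl⟩ := Nat.exists_eq_add_one_of_ne_zero (by omega : K₂ ≠ 0)
  obtain ⟨n₁, rfl⟩ := Nat.exists_eq_add_one_of_ne_zero (by omega : m₁ ≠ 0)
  obtain ⟨n₂, rfl⟩ := Nat.exists_eq_add_one_of_ne_zero (by omega : m₂ ≠ 0)
  have hn : (n₁ : ℝ) < n₂ := by exact_mod_cast (by omega : n₁ < n₂)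
  push_cast at hK₁ hK₂
  have hk₁ : k₁ < n₁ := by exact_mod_cast (show (k₁ : ℝ) < n₁ by nlinarith)
  have hk : k₁ < k₂ := by exact_mod_cast (show (k₁ : ℝ) < k₂ by nlinarith)
  have hnk : n₁ + k₂ < n₂ + k₁ := by exact_mod_cast (show (n₁ + k₂ : ℝ) < n₂ + k₁ by nlinarith)
  simp only [Nat.cast_add, Nat.cast_one, add_sub_cancel_right, Nat.add_sub_cancel]
  refine ⟨binCDF_sub_binCDF_single_crossing hk₁ hk (by omega), ?_⟩
  rw [intervalIntegral.integral_sub ((continuous_binCDF _ _).intervalIntegrable _ _)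
    ((continuous_binCDF _ _).intervalIntegrable _ _), integral_binCDF (by omega),
    integral_binCDF hk₁.le, hK₁, hK₂]
  field_simp
  ring
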